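/- Let M be a positive integer and q > 1 a real number with M ≥ q − 1, and let 0 < x ≤ M/(q−1). Define the sequence (a_i) recursively: if a_k has already been defined for all k < n, let a_n be the largest integer satisfying a_n ≤ M and a_1/q + ... + a_n/q^n < x. Then (a_i) is an infinite expansion of x, i.e., (a_i) has infinitely many nonzero terms and Σ_{i≥1} a_i q^{−i} = x. -/

import Mathlib

open Classical in
/-- The next quasi-greedy digit: the largest integer `m ≤ M` with `s + m / q ^ (n+1) < x`,
where `s` is the value of the previously chosen digits. -/
noncomputable def qgDigit (M : ℕ) (q x s : ℝ) (n : ℕ) : ℕ :=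
  Nat.findGreatest (fun m => s + (m : ℝ) / q ^ (n + 1) < x) M

/-- Partial sums of the quasi-greedy expansion of `x` in base `q` with digits `≤ M`. -/
noncomputable def qgSum (M : ℕ) (q x : ℝ) : ℕ → ℝ
  | 0 => 0
  | n + 1 => qgSum M q x n + (qgDigit M q x (qgSum M q x n) n : ℝ) / q ^ (n + 1)

/-- `quasiGreedy M q x n` is the `(n+1)`-st digit (so indexing starts at 0) of the
quasi-greedy expansion of `x` in base `q` with digits in `{0, ..., M}`:
recursively, it is the largest integer `a_n ≤ M` with `a_1/q + ⋯ + a_n/q^n < x`. -/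
noncomputable def quasiGreedy (M : ℕ) (q x : ℝ) (n : ℕ) : ℕ :=
  qgDigit M q x (qgSum M q x n) n

/-!
Every partial sum of the quasi-greedy expansion stays strictly below `x`, and the error
`x - s_n` is at most `M / ((q - 1) q ^ n)`: when the digit `M` is chosen this bound is
inherited because `M / (q - 1)` is a fixed point of `c ↦ q c - M`, and otherwise the next
larger digit would overshoot, so the error is below `q ^ -(n+1) ≤ M / ((q - 1) q ^ (n+1))`.
Hence the expansion converges to `x`, and it cannot terminate, since a finite expansion would
make `x` equal to one of its partial sums.
-/

open Filter Topology Finset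

variable {M : ℕ} {q x : ℝ}

lemma qgSum_lt (hx : 0 < x) (n : ℕ) : qgSum M q x n < x := by
  induction n with
  | zero => simpa [qgSum] using hx
  | succ n ih =>
    have hzero : qgSum M q x n + ((0 : ℕ) : ℝ) / q ^ (n + 1) < x := by simpa using ih
    exact Nat.findGreatest_spec (P := fun m => qgSum M q x n + (m : ℝ) / q ^ (n + 1) < x)
      (Nat.zero_le M) hzero

lemma sub_qgSum_le (hq : 1 < q) (hMq : q - 1 ≤ M) (hx : x ≤ M / (q - 1)) (n : ℕ) :
    x - qgSum M q x n ≤ M / (q - 1) / q ^ n := by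
  set C : ℝ := M / (q - 1)
  have hq1 : 0 < q - 1 := sub_pos.2 hq
  have hC : 1 ≤ C := (one_le_div hq1).2 hMq
  have hCM : C * (q - 1) = M := div_mul_cancel₀ _ hq1.ne'
  induction n with
  | zero => simpa [qgSum] using hx
  | succ n ih =>
    set s := qgSum M q x n
    set d := qgDigit M q x s n
    change x - (s + d / q ^ (n + 1)) ≤ C / q ^ (n + 1)
    have hdM : d ≤ M := Nat.findGreatest_le M
    rcases hdM.eq_or_lt with hd | hd
    · have hstep : C / q ^ n - M / q ^ (n + 1) = C / q ^ (n + 1) := by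
        rw [pow_succ]
        field_simp
        linarith
      rw [hd]
      linarith
    · have hover : x ≤ s + (d + 1 : ℕ) / q ^ (n + 1) := not_lt.1 <|
        Nat.findGreatest_is_greatest
          (P := fun m => s + (m : ℝ) / q ^ (n + 1) < x) (Nat.lt_succ_self d) hd
      have hunit : 1 / q ^ (n + 1) ≤ C / q ^ (n + 1) := by gcongr
      rw [Nat.cast_succ, add_div] at hover
      linarith

lemma sum_range_quasiGreedy (n : ℕ) :
    ∑ i ∈ range n, (quasiGreedy M q x i : ℝ) / q ^ (i + 1) = qgSum M q x n := by
  induction n with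
  | zero => simp [qgSum]
  | succ n ih => rw [sum_range_succ, ih, qgSum]; rfl

lemma tendsto_qgSum (hq : 1 < q) (hMq : q - 1 ≤ M) (hx0 : 0 < x) (hx1 : x ≤ M / (q - 1)) :
    Tendsto (qgSum M q x) atTop (𝓝 x) := by
  have herr : Tendsto (fun n => M / (q - 1) / q ^ n) atTop (𝓝 0) :=
    tendsto_const_nhds.div_atTop (tendsto_pow_atTop_atTop_of_one_lt hq)
  have hsub : Tendsto (fun n => x - qgSum M q x n) atTop (𝓝 0) :=
    squeeze_zero (fun n => (sub_pos.2 (qgSum_lt hx0 n)).le) (sub_qgSum_le hq hMq hx1) herr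
  simpa using (tendsto_const_nhds (x := x)).sub hsub

lemma hasSum_quasiGreedy (hq : 1 < q) (hMq : q - 1 ≤ M) (hx0 : 0 < x)
    (hx1 : x ≤ M / (q - 1)) :
    HasSum (fun i => (quasiGreedy M q x i : ℝ) / q ^ (i + 1)) x := by
  have hnonneg : ∀ i, 0 ≤ (quasiGreedy M q x i : ℝ) / q ^ (i + 1) := fun i => by
    have : 0 < q := by linarith
    positivity
  rw [hasSum_iff_tendsto_nat_of_nonneg hnonneg]
  simpa only [sum_range_quasiGreedy] using tendsto_qgSum hq hMq hx0 hx1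

lemma infinite_setOf_quasiGreedy_ne_zero (hx0 : 0 < x)
    (hsum : HasSum (fun i => (quasiGreedy M q x i : ℝ) / q ^ (i + 1)) x) :
    {n | quasiGreedy M q x n ≠ 0}.Infinite := by
  intro hfin
  obtain ⟨N, hN⟩ := hfin.bddAbove
  have hsupp : ∀ i ∉ range (N + 1), (quasiGreedy M q x i : ℝ) / q ^ (i + 1) = 0 := by
    intro i hi
    have : quasiGreedy M q x i = 0 := by
      by_contra hne
      exact hi (mem_range.2 (Nat.lt_succ_of_le (hN hne)))
    simp [this]
  have hx := hsum.unique (hasSum_sum_of_ne_finset_zero hsupp)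
  rw [sum_range_quasiGreedy] at hx
  exact (qgSum_lt hx0 (N + 1)).ne hx.symm

theorem quasiGreedy_infinite_expansion (M : ℕ) (q x : ℝ) (hq : 1 < q)
    (hMq : (M : ℝ) ≥ q - 1) (hx0 : 0 < x) (hx1 : x ≤ (M : ℝ) / (q - 1)) :
    {n | quasiGreedy M q x n ≠ 0}.Infinite ∧
      ∑' i, (quasiGreedy M q x i : ℝ) / q ^ (i + 1) = x := by
  have hsum := hasSum_quasiGreedy hq hMq hx0 hx1
  exact ⟨infinite_setOf_quasiGreedy_ne_zero hx0 hsum, hsum.tsum_eq⟩
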